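/- arXiv:1608.02616 — 2 statements merged into one kernel-verified Lean document; each statement's English description precedes it below -/
import Mathlib

section
/- (Theorem 3.2.1, Cauchy extension) Let a < c be real numbers and let f : [a,c] → ℝ be such that for every b with a < b < c, f is gauge integrable over [a,b] with integral F(b). If F(b) tends to a finite limit G as b → c from the left, then f is gauge integrable over [a,c] with integral G. Conversely, if f is gauge integrable over [a,c] with integral F(c), then F(b) exists for every a < b < c and F(b) → F(c) as b → c from the left. -/
/-- A tagged division of `[a, b]`: points `a = u 0 < u 1 < ⋯ < u n = b`
together with tags `t j ∈ [u j, u (j+1)]` for `j = 0, …, n-1`. -/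
structure TaggedDiv (a b : ℝ) where
  n : ℕ
  u : ℕ → ℝ
  t : ℕ → ℝ
  n_pos : 0 < n
  left : u 0 = a
  right : u n = b
  mono : ∀ j < n, u j < u (j + 1)
  tag_mem : ∀ j < n, t j ∈ Set.Icc (u j) (u (j + 1))

/-- A tagged division is `δ`-fine if each interval `[u j, u (j+1)]` is contained in
`(t j - δ (t j), t j + δ (t j))`. -/
def TaggedDiv.IsFine {a b : ℝ} (δ : ℝ → ℝ) (D : TaggedDiv a b) : Prop :=
  ∀ j < D.n,
    Set.Icc (D.u j) (D.u (j + 1)) ⊆ Set.Ioo (D.t j - δ (D.t j)) (D.t j + δ (D.t j))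

/-- The Riemann sum of `f` over a tagged division. -/
noncomputable def TaggedDiv.riemannSum {a b : ℝ} (D : TaggedDiv a b) (f : ℝ → ℝ) : ℝ :=
  ∑ j ∈ Finset.range D.n, f (D.t j) * (D.u (j + 1) - D.u j)

/-- A gauge on `[a, b]`: a function positive at each point of `[a, b]`. -/
def IsGauge (a b : ℝ) (δ : ℝ → ℝ) : Prop :=
  ∀ x ∈ Set.Icc a b, 0 < δ x

/-- `F` is the gauge (Henstock–Kurzweil) integral of `f` over `[a, b]`. -/
def HKIntegral (a b : ℝ) (f : ℝ → ℝ) (F : ℝ) : Prop :=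
  ∀ ε > 0, ∃ δ : ℝ → ℝ, IsGauge a b δ ∧
    ∀ D : TaggedDiv a b, D.IsFine δ → |D.riemannSum f - F| < ε

open Filter


namespace TaggedDiv

variable {a b c : ℝ}

theorem u_mono (D : TaggedDiv a b) : ∀ {i j : ℕ}, i ≤ j → j ≤ D.n → D.u i ≤ D.u j := by
  intro i j hij hj
  induction j with
  | zero => simp [Nat.le_zero.mp hij]
  | succ k ih =>
    rcases Nat.lt_or_ge i (k + 1) with h | h
    · exact le_trans (ih (Nat.lt_succ_iff.mp h) (by omega)) (D.mono k (by omega)).le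
    · have : i = k + 1 := le_antisymm hij h
      simp [this]

theorem u_lt (D : TaggedDiv a b) {i j : ℕ} (hij : i < j) (hj : j ≤ D.n) : D.u i < D.u j := by
  have h1 : D.u i ≤ D.u (j - 1) := D.u_mono (by omega) (by omega)
  have h2 : D.u (j - 1) < D.u j := by
    have := D.mono (j - 1) (by omega)
    rwa [show j - 1 + 1 = j by omega] at this
  linarith

theorem a_lt_b (D : TaggedDiv a b) : a < b := by
  have := D.u_lt (i := 0) (j := D.n) D.n_pos le_rfl
  rwa [D.left, D.right] at this

theorem u_mem (D : TaggedDiv a b) {j : ℕ} (hj : j ≤ D.n) : D.u j ∈ Set.Icc a b := by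
  constructor
  · have h := D.u_mono (Nat.zero_le j) hj; rwa [D.left] at h
  · have h := D.u_mono hj le_rfl; rwa [D.right] at h

theorem t_mem_Icc (D : TaggedDiv a b) {j : ℕ} (hj : j < D.n) : D.t j ∈ Set.Icc a b := by
  have h := D.tag_mem j hj
  have h1 := (D.u_mem (j := j) (by omega)).1
  have h2 := (D.u_mem (j := j + 1) (by omega)).2
  exact ⟨le_trans h1 h.1, le_trans h.2 h2⟩

theorem IsFine.mono_tags {D : TaggedDiv a b} {δ δ' : ℝ → ℝ} (hD : D.IsFine δ)
    (h : ∀ j < D.n, δ (D.t j) ≤ δ' (D.t j)) : D.IsFine δ' := by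
  intro j hj x hx
  have := hD j hj hx
  have hle := h j hj
  constructor <;> [linarith [this.1]; linarith [this.2]]

theorem IsFine.mono {D : TaggedDiv a b} {δ δ' : ℝ → ℝ} (hD : D.IsFine δ)
    (h : ∀ x, δ x ≤ δ' x) : D.IsFine δ' :=
  hD.mono_tags fun j _ => h (D.t j)

/-- The one-interval tagged division. -/
def single (hab : a < b) (t0 : ℝ) (ht : t0 ∈ Set.Icc a b) : TaggedDiv a b where
  n := 1
  u := fun j => if j = 0 then a else b
  t := fun _ => t0
  n_pos := one_pos
  left := rfl
  right := by norm_num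
  mono := by intro j hj; interval_cases j; simpa using hab
  tag_mem := by intro j hj; interval_cases j; simpa using ht

theorem single_sum (hab : a < b) (t0 : ℝ) (ht : t0 ∈ Set.Icc a b) (f : ℝ → ℝ) :
    (single hab t0 ht).riemannSum f = f t0 * (b - a) := by
  simp [riemannSum, single]

theorem single_fine (hab : a < b) (t0 : ℝ) (ht : t0 ∈ Set.Icc a b) {δ : ℝ → ℝ}
    (h : Set.Icc a b ⊆ Set.Ioo (t0 - δ t0) (t0 + δ t0)) : (single hab t0 ht).IsFine δ := by
  intro j hj
  have hj0 : j = 0 := Nat.lt_one_iff.mp hj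
  subst hj0
  simpa [single] using h


/-- Auxiliary: the partition points of the concatenation. -/
def appendU (D1 : TaggedDiv a b) (D2 : TaggedDiv b c) : ℕ → ℝ :=
  fun j => if j ≤ D1.n then D1.u j else D2.u (j - D1.n)

def appendT (D1 : TaggedDiv a b) (D2 : TaggedDiv b c) : ℕ → ℝ :=
  fun j => if j < D1.n then D1.t j else D2.t (j - D1.n)

theorem appendU_le {D1 : TaggedDiv a b} {D2 : TaggedDiv b c} {j : ℕ} (h : j ≤ D1.n) :
    appendU D1 D2 j = D1.u j := if_pos h

theorem appendU_ge {D1 : TaggedDiv a b} {D2 : TaggedDiv b c} {j : ℕ} (h : D1.n ≤ j) :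
    appendU D1 D2 j = D2.u (j - D1.n) := by
  rcases eq_or_lt_of_le h with h1 | h1
  · rw [appendU, if_pos h1.ge, ← h1, Nat.sub_self, D2.left, D1.right]
  · rw [appendU, if_neg (by omega)]

theorem appendT_lt {D1 : TaggedDiv a b} {D2 : TaggedDiv b c} {j : ℕ} (h : j < D1.n) :
    appendT D1 D2 j = D1.t j := if_pos h

theorem appendT_ge {D1 : TaggedDiv a b} {D2 : TaggedDiv b c} {j : ℕ} (h : D1.n ≤ j) :
    appendT D1 D2 j = D2.t (j - D1.n) := if_neg (by omega)

/-- Concatenation of tagged divisions. -/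
def append (D1 : TaggedDiv a b) (D2 : TaggedDiv b c) : TaggedDiv a c where
  n := D1.n + D2.n
  u := appendU D1 D2
  t := appendT D1 D2
  n_pos := Nat.add_pos_left D1.n_pos _
  left := by rw [appendU_le (Nat.zero_le _), D1.left]
  right := by
    rw [appendU_ge (Nat.le_add_right _ _), Nat.add_sub_cancel_left, D2.right]
  mono := by
    intro j hj
    by_cases h : j < D1.n
    · rw [appendU_le h.le, appendU_le h, ]
      exact D1.mono j h
    · push_neg at h
      rw [appendU_ge h, appendU_ge (by omega), show j + 1 - D1.n = (j - D1.n) + 1 by omega]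
      exact D2.mono (j - D1.n) (by omega)
  tag_mem := by
    intro j hj
    by_cases h : j < D1.n
    · rw [appendU_le h.le, appendU_le h, appendT_lt h]
      exact D1.tag_mem j h
    · push_neg at h
      rw [appendU_ge h, appendU_ge (by omega), appendT_ge h,
        show j + 1 - D1.n = (j - D1.n) + 1 by omega]
      exact D2.tag_mem (j - D1.n) (by omega)

theorem append_fine {D1 : TaggedDiv a b} {D2 : TaggedDiv b c} {δ : ℝ → ℝ}
    (h1 : D1.IsFine δ) (h2 : D2.IsFine δ) : (D1.append D2).IsFine δ := by
  intro j hj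
  show Set.Icc (appendU D1 D2 j) (appendU D1 D2 (j + 1)) ⊆
    Set.Ioo (appendT D1 D2 j - δ (appendT D1 D2 j)) (appendT D1 D2 j + δ (appendT D1 D2 j))
  by_cases h : j < D1.n
  · rw [appendU_le h.le, appendU_le h, appendT_lt h]
    exact h1 j h
  · push_neg at h
    rw [appendU_ge h, appendU_ge (by omega), appendT_ge h,
      show j + 1 - D1.n = (j - D1.n) + 1 by omega]
    have hj2 : j - D1.n < D2.n := by
      have : j < D1.n + D2.n := hj
      omega
    exact h2 (j - D1.n) hj2

theorem append_sum (D1 : TaggedDiv a b) (D2 : TaggedDiv b c) (f : ℝ → ℝ) :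
    (D1.append D2).riemannSum f = D1.riemannSum f + D2.riemannSum f := by
  show (∑ j ∈ Finset.range (D1.n + D2.n),
      f (appendT D1 D2 j) * (appendU D1 D2 (j + 1) - appendU D1 D2 j)) = _
  rw [Finset.sum_range_add]
  congr 1
  · apply Finset.sum_congr rfl
    intro j hj
    rw [Finset.mem_range] at hj
    rw [appendT_lt hj, appendU_le hj.le, appendU_le hj]
  · apply Finset.sum_congr rfl
    intro i hi
    rw [Finset.mem_range] at hi
    rw [appendT_ge (Nat.le_add_right _ _), appendU_ge (Nat.le_add_right _ _),
      appendU_ge (by omega), Nat.add_sub_cancel_left,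
      show D1.n + i + 1 - D1.n = i + 1 by omega]

/-- The first `m` intervals of a tagged division. -/
def take (D : TaggedDiv a b) (m : ℕ) (h0 : 0 < m) (hm : m ≤ D.n) : TaggedDiv a (D.u m) where
  n := m
  u := D.u
  t := D.t
  n_pos := h0
  left := D.left
  right := rfl
  mono := fun j hj => D.mono j (by omega)
  tag_mem := fun j hj => D.tag_mem j (by omega)

theorem take_fine {D : TaggedDiv a b} {δ : ℝ → ℝ} (hD : D.IsFine δ)
    {m : ℕ} (h0 : 0 < m) (hm : m ≤ D.n) : (D.take m h0 hm).IsFine δ :=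
  fun j hj => hD j (by exact lt_of_lt_of_le hj hm)

theorem take_sum (D : TaggedDiv a b) (m : ℕ) (h0 : 0 < m) (hm : m ≤ D.n) (f : ℝ → ℝ) :
    (D.take m h0 hm).riemannSum f
      = ∑ j ∈ Finset.range m, f (D.t j) * (D.u (j + 1) - D.u j) := rfl

/-- The intervals of a tagged division from index `m` on. -/
def drop (D : TaggedDiv a b) (m : ℕ) (hm : m < D.n) : TaggedDiv (D.u m) b where
  n := D.n - m
  u := fun j => D.u (m + j)
  t := fun j => D.t (m + j)
  n_pos := by omega
  left := by show D.u (m + 0) = D.u m; rw [Nat.add_zero]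
  right := by show D.u (m + (D.n - m)) = b; rw [show m + (D.n - m) = D.n by omega, D.right]
  mono := by
    intro j hj
    show D.u (m + j) < D.u (m + (j + 1))
    rw [show m + (j + 1) = (m + j) + 1 by omega]
    exact D.mono (m + j) (by have : j < D.n - m := hj; omega)
  tag_mem := by
    intro j hj
    show D.t (m + j) ∈ Set.Icc (D.u (m + j)) (D.u (m + (j + 1)))
    rw [show m + (j + 1) = (m + j) + 1 by omega]
    exact D.tag_mem (m + j) (by have : j < D.n - m := hj; omega)

theorem drop_fine {D : TaggedDiv a b} {δ : ℝ → ℝ} (hD : D.IsFine δ)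
    {m : ℕ} (hm : m < D.n) : (D.drop m hm).IsFine δ := by
  intro j hj
  show Set.Icc (D.u (m + j)) (D.u (m + (j + 1))) ⊆ _
  rw [show m + (j + 1) = (m + j) + 1 by omega]
  exact hD (m + j) (by have : j < D.n - m := hj; omega)

theorem take_drop_sum (D : TaggedDiv a b) (m : ℕ) (h0 : 0 < m) (hm : m < D.n) (f : ℝ → ℝ) :
    D.riemannSum f = (D.take m h0 hm.le).riemannSum f + (D.drop m hm).riemannSum f := by
  rw [take_sum]
  have hdrop : (D.drop m hm).riemannSum f
      = ∑ i ∈ Finset.range (D.n - m), f (D.t (m + i)) * (D.u (m + i + 1) - D.u (m + i)) := by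
    show (∑ i ∈ Finset.range (D.n - m),
        f (D.t (m + i)) * (D.u (m + (i + 1)) - D.u (m + i))) = _
    apply Finset.sum_congr rfl
    intro i _
    rw [show m + (i + 1) = m + i + 1 by omega]
  rw [hdrop]
  show (∑ j ∈ Finset.range D.n, f (D.t j) * (D.u (j + 1) - D.u j)) = _
  set k := D.n - m with hk
  rw [show D.n = m + k from by omega, Finset.sum_range_add]

/-- **Cousin's lemma**: δ-fine tagged divisions exist. -/
theorem cousin {δ : ℝ → ℝ} (hab : a < b) (hδ : IsGauge a b δ) :
    ∃ D : TaggedDiv a b, D.IsFine δ := by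
  classical
  set S : Set ℝ := {x | a < x ∧ x ≤ b ∧ ∃ D : TaggedDiv a x, D.IsFine δ} with hS
  have hδa : 0 < δ a := hδ a ⟨le_rfl, hab.le⟩
  -- S is nonempty
  have hne : S.Nonempty := by
    refine ⟨min b (a + δ a / 2), ?_, min_le_left _ _, ?_⟩
    · simp only [lt_min_iff]; constructor <;> linarith
    · have h1 : a < min b (a + δ a / 2) := by simp only [lt_min_iff]; constructor <;> linarith
      refine ⟨single h1 a ⟨le_rfl, h1.le⟩, single_fine h1 a _ ?_⟩
      intro x hx
      have := hx.1; have := hx.2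
      have h2 : min b (a + δ a / 2) ≤ a + δ a / 2 := min_le_right _ _
      constructor <;> simp only [Set.mem_Icc] at hx <;> [linarith [hx.1]; linarith [hx.2]]
  have hbdd : BddAbove S := ⟨b, fun x hx => hx.2.1⟩
  set s := sSup S with hs
  have hsb : s ≤ b := csSup_le hne fun x hx => hx.2.1
  have has : a < s := by
    obtain ⟨x, hx⟩ := hne
    exact lt_of_lt_of_le hx.1 (le_csSup hbdd hx)
  have hδs : 0 < δ s := hδ s ⟨has.le, hsb⟩
  -- s belongs to S
  have hsS : s ∈ S := by
    obtain ⟨x, hxS, hxl⟩ := exists_lt_of_lt_csSup hne (show s - δ s < s by linarith)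
    have hxs : x ≤ s := le_csSup hbdd hxS
    rcases eq_or_lt_of_le hxs with h1 | h1
    · rwa [h1] at hxS
    · obtain ⟨D, hD⟩ := hxS.2.2
      refine ⟨has, hsb, D.append (single h1 s ⟨h1.le, le_rfl⟩), append_fine hD ?_⟩
      apply single_fine
      intro y hy
      constructor
      · have := hy.1; linarith
      · have := hy.2; linarith
  -- s = b
  rcases eq_or_lt_of_le hsb with h1 | h1
  · obtain ⟨_, _, D, hD⟩ := hsS
    exact h1 ▸ ⟨D, hD⟩
  · exfalso
    set s' := min b (s + δ s / 2) with hs'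
    have hss' : s < s' := by simp only [hs', lt_min_iff]; constructor <;> linarith
    have hs'S : s' ∈ S := by
      obtain ⟨_, _, D, hD⟩ := hsS
      refine ⟨lt_trans has hss', min_le_left _ _,
        D.append (single hss' s ⟨le_rfl, hss'.le⟩), append_fine hD ?_⟩
      · apply single_fine
        intro y hy
        have h2 : s' ≤ s + δ s / 2 := min_le_right _ _
        constructor
        · have := hy.1; linarith
        · have := hy.2; linarith
    have := le_csSup hbdd hs'S
    rw [← hs] at this
    linarith

end TaggedDiv

open TaggedDiv

/-- Uniqueness of the gauge integral. -/
theorem HKIntegral.unique {a b : ℝ} {f : ℝ → ℝ} {F1 F2 : ℝ} (hab : a < b)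
    (h1 : HKIntegral a b f F1) (h2 : HKIntegral a b f F2) : F1 = F2 := by
  by_contra hne
  have hpos : 0 < |F1 - F2| / 2 := by
    have : F1 - F2 ≠ 0 := sub_ne_zero.mpr hne
    have := abs_pos.mpr this
    linarith
  obtain ⟨δ1, hδ1, hb1⟩ := h1 _ hpos
  obtain ⟨δ2, hδ2, hb2⟩ := h2 _ hpos
  have hg : IsGauge a b (fun x => min (δ1 x) (δ2 x)) := fun x hx =>
    lt_min (hδ1 x hx) (hδ2 x hx)
  obtain ⟨D, hD⟩ := cousin hab hg
  have hD1 : D.IsFine δ1 := hD.mono fun x => min_le_left _ _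
  have hD2 : D.IsFine δ2 := hD.mono fun x => min_le_right _ _
  have e1 := hb1 D hD1
  have e2 := hb2 D hD2
  have := abs_sub_abs_le_abs_sub (D.riemannSum f - F1) (D.riemannSum f - F2)
  have h3 : |F1 - F2| ≤ |D.riemannSum f - F1| + |D.riemannSum f - F2| := by
    have := abs_sub (D.riemannSum f - F2) (D.riemannSum f - F1)
    calc |F1 - F2| = |(D.riemannSum f - F2) - (D.riemannSum f - F1)| := by ring_nf
      _ ≤ _ := by
        rw [abs_sub_comm]
        exact abs_sub _ _
  linarith

/-- Cauchy criterion (sufficiency) for gauge integrability. -/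
theorem hkIntegral_of_cauchy {a b : ℝ} {f : ℝ → ℝ} (hab : a < b)
    (H : ∀ ε > 0, ∃ δ : ℝ → ℝ, IsGauge a b δ ∧
      ∀ D1 D2 : TaggedDiv a b, D1.IsFine δ → D2.IsFine δ →
        |D1.riemannSum f - D2.riemannSum f| ≤ ε) :
    ∃ I : ℝ, HKIntegral a b f I := by
  classical
  choose δs hδs hδsb using fun k : ℕ => H (1 / (k + 1)) (by positivity)
  set Δ : ℕ → ℝ → ℝ := fun k x => (Finset.range (k + 1)).inf' ⟨0, by simp⟩ (fun i => δs i x)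
    with hΔ
  have hΔg : ∀ k, IsGauge a b (Δ k) := by
    intro k x hx
    rw [hΔ]
    refine (Finset.lt_inf'_iff _).2 ?_
    intro i _
    exact hδs i x hx
  have hΔle : ∀ k i, i ≤ k → ∀ x, Δ k x ≤ δs i x := by
    intro k i hik x
    exact Finset.inf'_le _ (Finset.mem_range.mpr (by omega))
  have hΔmono : ∀ k l, k ≤ l → ∀ x, Δ l x ≤ Δ k x := by
    intro k l hkl x
    rw [hΔ]
    refine Finset.le_inf' _ _ ?_
    intro i hi
    rw [Finset.mem_range] at hi
    exact Finset.inf'_le _ (Finset.mem_range.mpr (by omega))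
  choose Ds hDs using fun k : ℕ => cousin hab (hΔg k)
  set Sq : ℕ → ℝ := fun k => (Ds k).riemannSum f with hSq
  have key : ∀ N n m : ℕ, N ≤ n → N ≤ m → dist (Sq n) (Sq m) ≤ 1 / (N + 1) := by
    intro N n m hn hm
    rw [Real.dist_eq]
    apply hδsb N
    · exact (hDs n).mono fun x => le_trans (hΔmono N n hn x) (hΔle N N le_rfl x)
    · exact (hDs m).mono fun x => le_trans (hΔmono N m hm x) (hΔle N N le_rfl x)
  have hcauchy : CauchySeq Sq := by
    exact cauchySeq_of_le_tendsto_0 (fun N => 1 / ((N : ℝ) + 1))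
      (fun n m N hn hm => key N n m hn hm) tendsto_one_div_add_atTop_nhds_zero_nat
  obtain ⟨I, hI⟩ := cauchySeq_tendsto_of_complete hcauchy
  refine ⟨I, ?_⟩
  intro ε hε
  obtain ⟨k, hk⟩ := exists_nat_one_div_lt (show (0:ℝ) < ε / 2 by linarith)
  refine ⟨Δ k, hΔg k, ?_⟩
  intro D hD
  have hbd : ∀ l : ℕ, k ≤ l → |D.riemannSum f - Sq l| ≤ 1 / (k + 1) := by
    intro l hl
    apply hδsb k D (Ds l) (hD.mono fun x => hΔle k k le_rfl x)
    exact (hDs l).mono fun x => le_trans (hΔmono k l hl x) (hΔle k k le_rfl x)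
  have hlim : Tendsto (fun l => |D.riemannSum f - Sq l|) atTop (nhds |D.riemannSum f - I|) :=
    ((tendsto_const_nhds.sub hI).abs)
  have : |D.riemannSum f - I| ≤ 1 / (k + 1) := by
    apply le_of_tendsto hlim
    filter_upwards [eventually_ge_atTop k] with l hl using hbd l hl
  calc |D.riemannSum f - I| ≤ 1 / (k + 1) := this
    _ < ε / 2 := hk
    _ < ε := by linarith

theorem IsGauge.subset {a b p q : ℝ} {δ : ℝ → ℝ} (h : IsGauge a b δ) (hap : a ≤ p) (hqb : q ≤ b) :
    IsGauge p q δ := fun x hx => h x ⟨le_trans hap hx.1, le_trans hx.2 hqb⟩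

/-- Any fine division of a subinterval extends to a fine division of the whole interval,
changing the Riemann sum by a constant. -/
theorem exists_padding {a b p q : ℝ} {δ : ℝ → ℝ} (hap : a ≤ p) (hpq : p < q) (hqb : q ≤ b)
    (hδ : IsGauge a b δ) (f : ℝ → ℝ) :
    ∃ cst : ℝ, ∀ D : TaggedDiv p q, D.IsFine δ →
      ∃ D' : TaggedDiv a b, D'.IsFine δ ∧ D'.riemannSum f = D.riemannSum f + cst := by
  rcases eq_or_lt_of_le hap with h1 | h1 <;> rcases eq_or_lt_of_le hqb with h2 | h2
  · subst h1; subst h2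
    exact ⟨0, fun D hD => ⟨D, hD, by ring⟩⟩
  · subst h1
    obtain ⟨E2, hE2⟩ := cousin h2 (hδ.subset hpq.le le_rfl)
    exact ⟨E2.riemannSum f, fun D hD =>
      ⟨D.append E2, append_fine hD hE2, by rw [append_sum]⟩⟩
  · subst h2
    obtain ⟨E1, hE1⟩ := cousin h1 (hδ.subset le_rfl hpq.le)
    exact ⟨E1.riemannSum f, fun D hD =>
      ⟨E1.append D, append_fine hE1 hD, by rw [append_sum]; ring⟩⟩
  · obtain ⟨E1, hE1⟩ := cousin h1 (hδ.subset le_rfl (le_trans hpq.le h2.le))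
    obtain ⟨E2, hE2⟩ := cousin h2 (hδ.subset (le_trans h1.le hpq.le) le_rfl)
    exact ⟨E1.riemannSum f + E2.riemannSum f, fun D hD =>
      ⟨E1.append (D.append E2), append_fine hE1 (append_fine hD hE2),
        by rw [append_sum, append_sum]; ring⟩⟩

/-- Integrability over subintervals. -/
theorem HKIntegral.sub {a b p q I : ℝ} {f : ℝ → ℝ} (hI : HKIntegral a b f I)
    (hap : a ≤ p) (hpq : p < q) (hqb : q ≤ b) : ∃ J : ℝ, HKIntegral p q f J := by
  apply hkIntegral_of_cauchy hpq
  intro ε hε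
  obtain ⟨δ, hδ, hb⟩ := hI (ε / 2) (by linarith)
  obtain ⟨cst, hcst⟩ := exists_padding hap hpq hqb hδ f
  refine ⟨δ, hδ.subset hap hqb, ?_⟩
  intro D1 D2 h1 h2
  obtain ⟨D1', hf1, hs1⟩ := hcst D1 h1
  obtain ⟨D2', hf2, hs2⟩ := hcst D2 h2
  have e1 := hb D1' hf1
  have e2 := hb D2' hf2
  rw [hs1] at e1
  rw [hs2] at e2
  rw [abs_lt] at e1 e2
  have : |D1.riemannSum f - D2.riemannSum f| < ε := abs_lt.mpr ⟨by linarith, by linarith⟩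
  exact this.le

/-- (Weak) additivity of the gauge integral. -/
theorem HKIntegral.add_eq {a b c A B I : ℝ} {f : ℝ → ℝ} (hab : a < b) (hbc : b < c)
    (hA : HKIntegral a b f A) (hB : HKIntegral b c f B) (hI : HKIntegral a c f I) :
    I = A + B := by
  by_contra hne
  have hpos : 0 < |I - (A + B)| := by
    have : I - (A + B) ≠ 0 := sub_ne_zero.mpr hne
    exact abs_pos.mpr this
  set ε := |I - (A + B)| with hεdef
  obtain ⟨δA, hδA, hbA⟩ := hA (ε / 3) (by linarith)
  obtain ⟨δB, hδB, hbB⟩ := hB (ε / 3) (by linarith)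
  obtain ⟨δI, hδI, hbI⟩ := hI (ε / 3) (by linarith)
  have hg1 : IsGauge a b (fun x => min (δA x) (δI x)) := fun x hx =>
    lt_min (hδA x hx) (hδI x ⟨hx.1, le_trans hx.2 hbc.le⟩)
  have hg2 : IsGauge b c (fun x => min (δB x) (δI x)) := fun x hx =>
    lt_min (hδB x hx) (hδI x ⟨le_trans hab.le hx.1, hx.2⟩)
  obtain ⟨D1, hD1⟩ := cousin hab hg1
  obtain ⟨D2, hD2⟩ := cousin hbc hg2
  have e1 := hbA D1 (hD1.mono fun x => min_le_left _ _)
  have e2 := hbB D2 (hD2.mono fun x => min_le_left _ _)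
  have e3 := hbI (D1.append D2)
    (append_fine (hD1.mono fun x => min_le_right _ _) (hD2.mono fun x => min_le_right _ _))
  rw [append_sum] at e3
  rw [abs_lt] at e1 e2 e3
  have : |I - (A + B)| < ε := abs_lt.mpr ⟨by linarith, by linarith⟩
  linarith

/-- Henstock-type estimate for initial segments: if `γ` witnesses `ε`-accuracy of the
integral `I` over `[p,q]`, then any `γ`-fine division of an initial segment `[p,r]`
approximates the integral `J` over `[p,r]` to within `ε`. -/
theorem partial_est_left {p q r I J ε : ℝ} {f γ : ℝ → ℝ} (hpr : p < r) (hrq : r ≤ q)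
    (hI : HKIntegral p q f I) (hJ : HKIntegral p r f J) (hγ : IsGauge p q γ)
    (hb : ∀ E : TaggedDiv p q, E.IsFine γ → |E.riemannSum f - I| < ε)
    (D : TaggedDiv p r) (hD : D.IsFine γ) : |D.riemannSum f - J| ≤ ε := by
  rcases eq_or_lt_of_le hrq with heq | hlt
  · subst heq
    rw [HKIntegral.unique hpr hJ hI]
    exact (hb D hD).le
  · by_contra hcon
    push_neg at hcon
    set η := (|D.riemannSum f - J| - ε) / 2 with hη
    have hηpos : 0 < η := by
      have : 0 ≤ |D.riemannSum f - J| - ε := by linarith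
      rw [hη]
      linarith
    obtain ⟨K, hK⟩ := hI.sub hpr.le hlt le_rfl
    have hIJK : I = J + K := HKIntegral.add_eq hpr hlt hJ hK hI
    obtain ⟨δ2, hδ2, hb2⟩ := hK η hηpos
    have hg : IsGauge r q (fun x => min (γ x) (δ2 x)) := fun x hx =>
      lt_min (hγ x ⟨le_trans hpr.le hx.1, hx.2⟩) (hδ2 x hx)
    obtain ⟨E0, hE0⟩ := cousin hlt hg
    have h1 := hb (D.append E0) (append_fine hD (hE0.mono fun x => min_le_left _ _))
    have h2 := hb2 E0 (hE0.mono fun x => min_le_right _ _)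
    rw [append_sum] at h1
    rw [abs_lt] at h1 h2
    have : |D.riemannSum f - J| < ε + η := abs_lt.mpr ⟨by linarith, by linarith⟩
    rw [hη] at this
    linarith

/-- Henstock-type estimate for terminal segments. -/
theorem partial_est_right {p q r I J ε : ℝ} {f γ : ℝ → ℝ} (hpr : p ≤ r) (hrq : r < q)
    (hI : HKIntegral p q f I) (hJ : HKIntegral r q f J) (hγ : IsGauge p q γ)
    (hb : ∀ E : TaggedDiv p q, E.IsFine γ → |E.riemannSum f - I| < ε)
    (D : TaggedDiv r q) (hD : D.IsFine γ) : |D.riemannSum f - J| ≤ ε := by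
  rcases eq_or_lt_of_le hpr with heq | hlt
  · subst heq
    rw [HKIntegral.unique hrq hJ hI]
    exact (hb D hD).le
  · by_contra hcon
    push_neg at hcon
    set η := (|D.riemannSum f - J| - ε) / 2 with hη
    have hηpos : 0 < η := by
      have : 0 ≤ |D.riemannSum f - J| - ε := by linarith
      rw [hη]
      linarith
    obtain ⟨K, hK⟩ := hI.sub le_rfl hlt hrq.le
    have hIJK : I = K + J := HKIntegral.add_eq hlt hrq hK hJ hI
    obtain ⟨δ2, hδ2, hb2⟩ := hK η hηpos
    have hg : IsGauge p r (fun x => min (γ x) (δ2 x)) := fun x hx =>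
      lt_min (hγ x ⟨hx.1, le_trans hx.2 hrq.le⟩) (hδ2 x hx)
    obtain ⟨E0, hE0⟩ := cousin hlt hg
    have h1 := hb (E0.append D) (append_fine (hE0.mono fun x => min_le_left _ _) hD)
    have h2 := hb2 E0 (hE0.mono fun x => min_le_right _ _)
    rw [append_sum] at h1
    rw [abs_lt] at h1 h2
    have : |D.riemannSum f - J| < ε + η := abs_lt.mpr ⟨by linarith, by linarith⟩
    rw [hη] at this
    linarith

/-- Splitting a fine tagged division at a point `r` which the gauge `δ` "forces":
any interval of the division containing `r` must be tagged at `r`. -/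
theorem split_at {p q r : ℝ} (f δ : ℝ → ℝ) (D : TaggedDiv p q) (hD : D.IsFine δ)
    (hpr : p < r) (hrq : r < q)
    (hforce : ∀ x ∈ Set.Icc p q, |x - r| < δ x → x = r) :
    ∃ (D1 : TaggedDiv p r) (D2 : TaggedDiv r q), D1.IsFine δ ∧ D2.IsFine δ ∧
      D1.riemannSum f + D2.riemannSum f = D.riemannSum f := by
  classical
  obtain ⟨j0, hj0lt, h_le, h_gt⟩ :
      ∃ j0 : ℕ, j0 < D.n ∧ D.u j0 ≤ r ∧ r < D.u (j0 + 1) := by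
    set P : ℕ → Prop := fun j => D.u j ≤ r with hP
    have hP0 : P 0 := by show D.u 0 ≤ r; rw [D.left]; exact hpr.le
    refine ⟨Nat.findGreatest P D.n, ?_, ?_, ?_⟩
    · rcases eq_or_lt_of_le (Nat.findGreatest_le (P := P) D.n) with h | h
      · exfalso
        have h2 : P (Nat.findGreatest P D.n) := Nat.findGreatest_spec (Nat.zero_le _) hP0
        rw [h] at h2
        have : D.u D.n ≤ r := h2
        rw [D.right] at this
        linarith
      · exact h
    · exact Nat.findGreatest_spec (Nat.zero_le _) hP0
    · by_contra hcon
      push_neg at hcon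
      have hlt : Nat.findGreatest P D.n < Nat.findGreatest P D.n + 1 := Nat.lt_succ_self _
      have hle : Nat.findGreatest P D.n + 1 ≤ D.n := by
        rcases eq_or_lt_of_le (Nat.findGreatest_le (P := P) D.n) with h | h
        · exfalso
          have h2 : P (Nat.findGreatest P D.n) := Nat.findGreatest_spec (Nat.zero_le _) hP0
          rw [h] at h2
          have : D.u D.n ≤ r := h2
          rw [D.right] at this
          linarith
        · omega
      exact Nat.findGreatest_is_greatest hlt hle hcon
  rcases eq_or_lt_of_le h_le with heq | hlt
  · -- r is a partition point
    have h1 : 0 < j0 := by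
      rcases Nat.eq_zero_or_pos j0 with h | h
      · exfalso
        rw [h, D.left] at heq
        linarith
      · exact h
    subst heq
    exact ⟨D.take j0 h1 hj0lt.le, D.drop j0 hj0lt, take_fine hD h1 hj0lt.le,
      drop_fine hD hj0lt, (D.take_drop_sum j0 h1 hj0lt f).symm⟩
  · -- r is interior to [u j0, u (j0+1)]; its tag must be r
    have hrIoo := hD j0 hj0lt (Set.mem_Icc.mpr ⟨hlt.le, h_gt.le⟩)
    have htag : D.t j0 = r := by
      apply hforce (D.t j0) (D.t_mem_Icc hj0lt)
      rw [abs_lt]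
      constructor
      · have := hrIoo.2; linarith
      · have := hrIoo.1; linarith
    refine ⟨{ n := j0 + 1
              u := fun j => if j ≤ j0 then D.u j else r
              t := fun j => if j < j0 then D.t j else r
              n_pos := Nat.succ_pos _
              left := by
                show (if 0 ≤ j0 then D.u 0 else r) = p
                rw [if_pos (show 0 ≤ j0 from Nat.zero_le _)]; exact D.left
              right := by
                show (if j0 + 1 ≤ j0 then D.u (j0 + 1) else r) = r
                rw [if_neg (show ¬ j0 + 1 ≤ j0 by omega)]
              mono := ?_
              tag_mem := ?_ },
            { n := D.n - j0
              u := fun j => if j = 0 then r else D.u (j0 + j)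
              t := fun j => if j = 0 then r else D.t (j0 + j)
              n_pos := by omega
              left := by
                show (if (0:ℕ) = 0 then r else D.u (j0 + 0)) = r
                rw [if_pos (show (0:ℕ) = 0 from rfl)]
              right := by
                show (if D.n - j0 = 0 then r else D.u (j0 + (D.n - j0))) = q
                rw [if_neg (show ¬ D.n - j0 = 0 by omega),
                  show j0 + (D.n - j0) = D.n by omega]
                exact D.right
              mono := ?_
              tag_mem := ?_ }, ?_, ?_, ?_⟩
    · -- mono of P1
      intro j hj
      show (if j ≤ j0 then D.u j else r) < (if j + 1 ≤ j0 then D.u (j + 1) else r)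
      by_cases hjj : j < j0
      · rw [if_pos (show j ≤ j0 from hjj.le), if_pos (show j + 1 ≤ j0 from hjj)]
        exact D.mono j (by omega)
      · have hj0' : j = j0 := by omega
        subst hj0'
        rw [if_pos (show j ≤ j from le_rfl), if_neg (show ¬ j + 1 ≤ j by omega)]
        exact hlt
    · -- tag_mem of P1
      intro j hj
      show (if j < j0 then D.t j else r) ∈
        Set.Icc (if j ≤ j0 then D.u j else r) (if j + 1 ≤ j0 then D.u (j + 1) else r)
      by_cases hjj : j < j0
      · rw [if_pos (show j < j0 from hjj), if_pos (show j ≤ j0 from hjj.le),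
          if_pos (show j + 1 ≤ j0 from hjj)]
        exact D.tag_mem j (by omega)
      · have hj0' : j = j0 := by omega
        subst hj0'
        rw [if_neg (show ¬ j < j from lt_irrefl j), if_pos (show j ≤ j from le_rfl),
          if_neg (show ¬ j + 1 ≤ j by omega)]
        exact ⟨hlt.le, le_rfl⟩
    · -- mono of P2
      intro j hj
      have hj' : j < D.n - j0 := hj
      show (if j = 0 then r else D.u (j0 + j)) < (if j + 1 = 0 then r else D.u (j0 + (j + 1)))
      rw [if_neg (show ¬ j + 1 = 0 by omega)]
      by_cases hj0' : j = 0
      · subst hj0'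
        rw [if_pos (show (0:ℕ) = 0 from rfl), show j0 + (0 + 1) = j0 + 1 by omega]
        exact h_gt
      · rw [if_neg hj0', show j0 + (j + 1) = (j0 + j) + 1 by omega]
        exact D.mono (j0 + j) (by omega)
    · -- tag_mem of P2
      intro j hj
      have hj' : j < D.n - j0 := hj
      show (if j = 0 then r else D.t (j0 + j)) ∈
        Set.Icc (if j = 0 then r else D.u (j0 + j)) (if j + 1 = 0 then r else D.u (j0 + (j + 1)))
      rw [if_neg (show ¬ j + 1 = 0 by omega)]
      by_cases hj0' : j = 0
      · subst hj0'
        rw [if_pos (show (0:ℕ) = 0 from rfl), if_pos (show (0:ℕ) = 0 from rfl),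
          show j0 + (0 + 1) = j0 + 1 by omega]
        exact ⟨le_rfl, h_gt.le⟩
      · rw [if_neg hj0', if_neg hj0', show j0 + (j + 1) = (j0 + j) + 1 by omega]
        exact D.tag_mem (j0 + j) (by omega)
    · -- P1 is fine
      intro j hj
      have hj' : j < j0 + 1 := hj
      show Set.Icc (if j ≤ j0 then D.u j else r) (if j + 1 ≤ j0 then D.u (j + 1) else r) ⊆
        Set.Ioo ((if j < j0 then D.t j else r) - δ (if j < j0 then D.t j else r))
          ((if j < j0 then D.t j else r) + δ (if j < j0 then D.t j else r))
      by_cases hjj : j < j0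
      · rw [if_pos (show j < j0 from hjj), if_pos (show j ≤ j0 from hjj.le),
          if_pos (show j + 1 ≤ j0 from hjj)]
        exact hD j (by omega)
      · have hj0' : j = j0 := by omega
        subst hj0'
        rw [if_neg (show ¬ j < j from lt_irrefl j), if_pos (show j ≤ j from le_rfl),
          if_neg (show ¬ j + 1 ≤ j by omega)]
        intro x hx
        have hx' : x ∈ Set.Icc (D.u j) (D.u (j + 1)) := ⟨hx.1, le_trans hx.2 h_gt.le⟩
        have := hD j hj0lt hx'
        rwa [htag] at this
    · -- P2 is fine
      intro j hj
      have hj' : j < D.n - j0 := hj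
      show Set.Icc (if j = 0 then r else D.u (j0 + j))
          (if j + 1 = 0 then r else D.u (j0 + (j + 1))) ⊆
        Set.Ioo ((if j = 0 then r else D.t (j0 + j)) - δ (if j = 0 then r else D.t (j0 + j)))
          ((if j = 0 then r else D.t (j0 + j)) + δ (if j = 0 then r else D.t (j0 + j)))
      rw [if_neg (show ¬ j + 1 = 0 by omega)]
      by_cases hj0' : j = 0
      · subst hj0'
        rw [if_pos (show (0:ℕ) = 0 from rfl), if_pos (show (0:ℕ) = 0 from rfl),
          show j0 + (0 + 1) = j0 + 1 by omega]
        intro x hx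
        have hx' : x ∈ Set.Icc (D.u j0) (D.u (j0 + 1)) := ⟨le_trans hlt.le hx.1, hx.2⟩
        have := hD j0 hj0lt hx'
        rwa [htag] at this
      · rw [if_neg hj0', if_neg hj0', show j0 + (j + 1) = (j0 + j) + 1 by omega]
        exact hD (j0 + j) (by omega)
    · -- the Riemann sums add up
      set A := ∑ j ∈ Finset.range j0, f (D.t j) * (D.u (j + 1) - D.u j) with hA
      set B := ∑ i ∈ Finset.range (D.n - j0 - 1),
        f (D.t (j0 + 1 + i)) * (D.u (j0 + 1 + i + 1) - D.u (j0 + 1 + i)) with hB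
      have hS1 : (∑ j ∈ Finset.range (j0 + 1),
          f (if j < j0 then D.t j else r) *
            ((if j + 1 ≤ j0 then D.u (j + 1) else r) - (if j ≤ j0 then D.u j else r)))
          = A + f r * (r - D.u j0) := by
        rw [Finset.sum_range_succ, if_neg (show ¬ j0 < j0 from lt_irrefl j0),
          if_neg (show ¬ j0 + 1 ≤ j0 by omega), if_pos (show j0 ≤ j0 from le_rfl)]
        congr 1
        apply Finset.sum_congr rfl
        intro j hj
        rw [Finset.mem_range] at hj
        rw [if_pos (show j < j0 from hj), if_pos (show j + 1 ≤ j0 from hj),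
          if_pos (show j ≤ j0 from hj.le)]
      have hS2 : (∑ j ∈ Finset.range (D.n - j0),
          f (if j = 0 then r else D.t (j0 + j)) *
            ((if j + 1 = 0 then r else D.u (j0 + (j + 1))) -
              (if j = 0 then r else D.u (j0 + j))))
          = f r * (D.u (j0 + 1) - r) + B := by
        have hshift : (∑ i ∈ Finset.range (D.n - j0 - 1),
            f (if i + 1 = 0 then r else D.t (j0 + (i + 1))) *
              ((if i + 1 + 1 = 0 then r else D.u (j0 + (i + 1 + 1))) -
                (if i + 1 = 0 then r else D.u (j0 + (i + 1))))) = B := by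
          rw [hB]
          apply Finset.sum_congr rfl
          intro i hi
          simp only [if_neg (show ¬ i + 1 = 0 by omega),
            if_neg (show ¬ i + 1 + 1 = 0 by omega),
            show j0 + (i + 1) = j0 + 1 + i by omega,
            show j0 + (i + 1 + 1) = j0 + 1 + i + 1 by omega]
        rw [show D.n - j0 = (D.n - j0 - 1) + 1 by omega, Finset.sum_range_succ', hshift]
        norm_num
        ring
      have hSD : D.riemannSum f = A + f r * (D.u (j0 + 1) - D.u j0) + B := by
        show (∑ j ∈ Finset.range D.n, f (D.t j) * (D.u (j + 1) - D.u j)) = _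
        rw [show D.n = (j0 + 1) + (D.n - j0 - 1) by omega, Finset.sum_range_add,
          Finset.sum_range_succ, htag]
      show (∑ j ∈ Finset.range (j0 + 1),
          f (if j < j0 then D.t j else r) *
            ((if j + 1 ≤ j0 then D.u (j + 1) else r) - (if j ≤ j0 then D.u j else r)))
        + (∑ j ∈ Finset.range (D.n - j0),
          f (if j = 0 then r else D.t (j0 + j)) *
            ((if j + 1 = 0 then r else D.u (j0 + (j + 1))) -
              (if j = 0 then r else D.u (j0 + j)))) = D.riemannSum f
      rw [hS1, hS2, hSD]
      ring

theorem cauchy_ext_part_two (a c : ℝ) (hac : a < c) (f : ℝ → ℝ) (Fc : ℝ)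
    (hFc : HKIntegral a c f Fc) :
    ∃ F : ℝ → ℝ, (∀ b : ℝ, a < b → b < c → HKIntegral a b f (F b)) ∧
      Tendsto F (nhdsWithin c (Set.Ioo a c)) (nhds Fc) := by
  classical
  have hsub : ∀ b : ℝ, a < b → b < c → ∃ J, HKIntegral a b f J :=
    fun b h1 h2 => hFc.sub le_rfl h1 h2.le
  set F : ℝ → ℝ := fun b => if h : a < b ∧ b < c then (hsub b h.1 h.2).choose else 0 with hFdef
  have hFb : ∀ b : ℝ, a < b → b < c → HKIntegral a b f (F b) := by
    intro b h1 h2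
    have heq : F b = (hsub b h1 h2).choose := by
      rw [hFdef]
      exact dif_pos ⟨h1, h2⟩
    rw [heq]
    exact (hsub b h1 h2).choose_spec
  refine ⟨F, hFb, ?_⟩
  rw [Metric.tendsto_nhds]
  intro ε hε
  rw [eventually_nhdsWithin_iff, Metric.eventually_nhds_iff]
  obtain ⟨δ, hδ, hb⟩ := hFc (ε / 4) (by linarith)
  have hδc : 0 < δ c := hδ c ⟨hac.le, le_rfl⟩
  have hfc1 : (0:ℝ) < |f c| + 1 := by have := abs_nonneg (f c); linarith
  refine ⟨min (δ c) (ε / (4 * (|f c| + 1))), by positivity, ?_⟩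
  intro b hbdist hbmem
  obtain ⟨hab', hbc'⟩ := hbmem
  obtain ⟨K, hK⟩ := hFc.sub hab'.le hbc' le_rfl
  have hKeq : Fc = F b + K := HKIntegral.add_eq hab' hbc' (hFb b hab' hbc') hK hFc
  rw [Real.dist_eq] at hbdist
  have hbd1 : |b - c| < δ c := lt_of_lt_of_le hbdist (min_le_left _ _)
  have hbd2 : |b - c| < ε / (4 * (|f c| + 1)) := lt_of_lt_of_le hbdist (min_le_right _ _)
  rw [abs_lt] at hbd1 hbd2
  have hsf : (single hbc' c ⟨hbc'.le, le_rfl⟩).IsFine δ := by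
    apply single_fine
    intro x hx
    constructor
    · have := hx.1; linarith [hbd1.1]
    · have := hx.2; linarith
  have hest := partial_est_right hab'.le hbc' hFc hK hδ hb _ hsf
  rw [single_sum hbc' c ⟨hbc'.le, le_rfl⟩ f] at hest
  have hfb : |f c * (c - b)| ≤ ε / 4 := by
    have h2 : |c - b| ≤ ε / (4 * (|f c| + 1)) := by
      rw [abs_of_pos (show 0 < c - b by linarith)]
      linarith [hbd2.1]
    calc |f c * (c - b)| = |f c| * |c - b| := abs_mul _ _
      _ ≤ |f c| * (ε / (4 * (|f c| + 1))) :=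
          mul_le_mul_of_nonneg_left h2 (abs_nonneg _)
      _ ≤ ε / 4 := by
          have h3 : |f c| * (ε / (4 * (|f c| + 1))) ≤ (|f c| + 1) * (ε / (4 * (|f c| + 1))) :=
            mul_le_mul_of_nonneg_right (by linarith) (by positivity)
          have h4 : (|f c| + 1) * (ε / (4 * (|f c| + 1))) = ε / 4 := by
            field_simp
          linarith
  rw [Real.dist_eq]
  have hFbK : F b - Fc = -K := by linarith
  rw [hFbK, abs_neg]
  have h6 : |K| ≤ |f c * (c - b)| + |f c * (c - b) - K| := by
    have h7 := abs_sub (f c * (c - b)) (f c * (c - b) - K)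
    have h8 : f c * (c - b) - (f c * (c - b) - K) = K := by ring
    rwa [h8] at h7
  calc |K| ≤ |f c * (c - b)| + |f c * (c - b) - K| := h6
    _ ≤ ε / 4 + ε / 4 := add_le_add hfb hest
    _ < ε := by linarith

theorem cauchy_ext_part_one (a c : ℝ) (hac : a < c) (f F : ℝ → ℝ)
    (hF : ∀ b : ℝ, a < b → b < c → HKIntegral a b f (F b)) (G : ℝ)
    (hG : Tendsto F (nhdsWithin c (Set.Ioo a c)) (nhds G)) :
    HKIntegral a c f G := by
  classical
  intro ε hε
  set ε' := ε / 4 with hε'def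
  have hε'pos : 0 < ε' := by rw [hε'def]; linarith
  have hca : (0:ℝ) < c - a := by linarith
  -- the sequence of division points
  set cs : ℕ → ℝ := fun k => c - (c - a) / 2 ^ k with hcsdef
  have hcs0 : cs 0 = a := by show c - (c - a) / 2 ^ 0 = a; norm_num
  have hcslt : ∀ k, cs k < c := by
    intro k
    show c - (c - a) / 2 ^ k < c
    have : 0 < (c - a) / 2 ^ k := by positivity
    linarith
  have hcsmono : ∀ k l : ℕ, k < l → cs k < cs l := by
    intro k l hkl
    show c - (c - a) / 2 ^ k < c - (c - a) / 2 ^ l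
    have h1 : (c - a) / 2 ^ l < (c - a) / 2 ^ k := by
      apply div_lt_div_of_pos_left hca (by positivity)
      exact pow_lt_pow_right₀ one_lt_two hkl
    linarith
  have hcsmono' : ∀ k l : ℕ, k ≤ l → cs k ≤ cs l := by
    intro k l hkl
    rcases eq_or_lt_of_le hkl with h | h
    · rw [h]
    · exact (hcsmono k l h).le
  have hgap : ∀ k, cs (k + 1) - cs k = (c - a) / 2 ^ (k + 1) := by
    intro k
    show (c - (c - a) / 2 ^ (k + 1)) - (c - (c - a) / 2 ^ k) = (c - a) / 2 ^ (k + 1)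
    have h2 : (c - a) / 2 ^ k = 2 * ((c - a) / 2 ^ (k + 1)) := by
      rw [pow_succ]
      field_simp
    rw [h2]
    ring
  have hcsa : ∀ k, a ≤ cs k := by
    intro k
    rw [← hcs0]
    exact hcsmono' 0 k (Nat.zero_le _)
  have hcsa' : ∀ k : ℕ, 0 < k → a < cs k := by
    intro k hk
    rw [← hcs0]
    exact hcsmono 0 k hk
  -- the chunk index function
  have hex : ∀ x, x < c → ∃ k, x < cs (k + 1) := by
    intro x hx
    obtain ⟨k, hk⟩ := pow_unbounded_of_one_lt ((c - a) / (c - x)) (one_lt_two (α := ℝ))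
    refine ⟨k, ?_⟩
    show x < c - (c - a) / 2 ^ (k + 1)
    have hcx : (0:ℝ) < c - x := by linarith
    have h3 : c - a < 2 ^ k * (c - x) := by rwa [div_lt_iff₀ hcx] at hk
    have h5 : (2:ℝ) ^ k ≤ 2 ^ (k + 1) := by
      apply pow_le_pow_right₀ (by norm_num)
      omega
    have h6 : c - a < 2 ^ (k + 1) * (c - x) := by nlinarith
    have h7 : (c - a) / 2 ^ (k + 1) < c - x := by
      rw [div_lt_iff₀ (by positivity : (0:ℝ) < 2 ^ (k + 1))]
      linarith
    linarith
  set κ : ℝ → ℕ := fun x => if h : x < c then Nat.find (hex x h) else 0 with hκdef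
  have hκspec : ∀ x, x < c → x < cs (κ x + 1) := by
    intro x h
    show x < cs ((if h' : x < c then Nat.find (hex x h') else 0) + 1)
    rw [dif_pos h]
    exact Nat.find_spec (hex x h)
  have hκmin : ∀ x, x < c → a ≤ x → cs (κ x) ≤ x := by
    intro x h hax
    show cs (if h' : x < c then Nat.find (hex x h') else 0) ≤ x
    rw [dif_pos h]
    rcases Nat.eq_zero_or_pos (Nat.find (hex x h)) with h0 | h0
    · rw [h0, hcs0]
      exact hax
    · by_contra hcon
      push_neg at hcon
      have hmin := Nat.find_min (hex x h) (show Nat.find (hex x h) - 1 < Nat.find (hex x h) by omega)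
      apply hmin
      rw [show Nat.find (hex x h) - 1 + 1 = Nat.find (hex x h) by omega]
      exact hcon
  have hκeq : ∀ (K : ℕ) (x : ℝ), cs K ≤ x → x < cs (K + 1) → κ x = K := by
    intro K x h1 h2
    have hxc : x < c := lt_trans h2 (hcslt _)
    have hax : a ≤ x := le_trans (hcsa K) h1
    have hs1 := hκspec x hxc
    have hs2 := hκmin x hxc hax
    by_contra hne
    rcases Nat.lt_or_ge (κ x) K with h | h
    · have : cs (κ x + 1) ≤ cs K := hcsmono' _ _ (by omega)
      linarith
    · have : cs (K + 1) ≤ cs (κ x) := hcsmono' _ _ (by omega)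
      linarith
  -- integrals over the chunks
  have hchunk : ∀ k : ℕ, ∃ A, HKIntegral (cs k) (cs (k + 1)) f A := by
    intro k
    have h1 : a < cs (k + 1) := hcsa' (k + 1) (Nat.succ_pos _)
    have h2 : cs (k + 1) < c := hcslt _
    exact (hF (cs (k + 1)) h1 h2).sub (hcsa k) (hcsmono k (k + 1) (Nat.lt_succ_self _)) le_rfl
  choose A hA using hchunk
  set e : ℕ → ℝ := fun k => ε' / 2 ^ (k + 1) with hedef
  have hepos : ∀ k, 0 < e k := by
    intro k
    show 0 < ε' / 2 ^ (k + 1)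
    positivity
  choose γ hγg hγb using fun k => hA k (e k) (hepos k)
  -- tail control
  rw [Metric.tendsto_nhds] at hG
  have hGε := hG ε' hε'pos
  rw [eventually_nhdsWithin_iff, Metric.eventually_nhds_iff] at hGε
  obtain ⟨ρ, hρpos, hρ⟩ := hGε
  have hfc1 : (0:ℝ) < |f c| + 1 := by have := abs_nonneg (f c); linarith
  set δc := min (min ρ (c - a)) (ε' / (|f c| + 1)) with hδcdef
  have hδcpos : 0 < δc := lt_min (lt_min hρpos hca) (by positivity)
  -- the gauge
  set δ : ℝ → ℝ := fun x =>
    if x = c then δc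
    else if x = cs (κ x) then min (min (γ (κ x) x) (γ (κ x - 1) x)) (cs (κ x + 1) - cs (κ x))
    else min (γ (κ x) x) (min (x - cs (κ x)) (cs (κ x + 1) - x)) with hδdef
  have hδc_eq : δ c = δc := by
    show (if (c:ℝ) = c then δc else _) = δc
    rw [if_pos rfl]
  have hδval : ∀ x, x ≠ c → δ x =
      if x = cs (κ x) then min (min (γ (κ x) x) (γ (κ x - 1) x)) (cs (κ x + 1) - cs (κ x))
      else min (γ (κ x) x) (min (x - cs (κ x)) (cs (κ x + 1) - x)) := by
    intro x hx
    show (if x = c then δc else _) = _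
    rw [if_neg hx]
  -- positivity of the gauge
  have hδpos : IsGauge a c δ := by
    intro x hx
    rcases eq_or_lt_of_le hx.2 with hxc | hxc
    · rw [hxc, hδc_eq]
      exact hδcpos
    · have h1 := hκmin x hxc hx.1
      have h2 := hκspec x hxc
      rw [hδval x (ne_of_lt hxc)]
      by_cases hxcs : x = cs (κ x)
      · rw [if_pos hxcs]
        refine lt_min (lt_min ?_ ?_) ?_
        · exact hγg (κ x) x ⟨h1, h2.le⟩
        · apply hγg (κ x - 1) x
          constructor
          · rcases Nat.eq_zero_or_pos (κ x) with h0 | h0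
            · rw [h0] at h1 ⊢
              exact h1
            · have h3 : cs (κ x - 1) ≤ cs (κ x) := hcsmono' _ _ (by omega)
              rw [← hxcs] at h3
              exact h3
          · rcases Nat.eq_zero_or_pos (κ x) with h0 | h0
            · rw [h0] at h2 ⊢
              exact h2.le
            · rw [show κ x - 1 + 1 = κ x by omega, ← hxcs]
        · rw [hgap (κ x)]
          exact div_pos hca (by positivity)
      · rw [if_neg hxcs]
        refine lt_min (hγg (κ x) x ⟨h1, h2.le⟩) (lt_min ?_ ?_)
        · have : cs (κ x) < x := lt_of_le_of_ne h1 (fun he => hxcs he.symm)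
          linarith
        · linarith
  -- δ x ≤ c - x for x in [a, c)
  have hδlec : ∀ x, a ≤ x → x < c → δ x ≤ c - x := by
    intro x hax hxc
    have h1 := hκmin x hxc hax
    have h2 := hκspec x hxc
    have h3 : cs (κ x + 1) ≤ c := (hcslt _).le
    rw [hδval x (ne_of_lt hxc)]
    by_cases hxcs : x = cs (κ x)
    · rw [if_pos hxcs]
      calc min (min (γ (κ x) x) (γ (κ x - 1) x)) (cs (κ x + 1) - cs (κ x))
          ≤ cs (κ x + 1) - cs (κ x) := min_le_right _ _
        _ ≤ c - x := by linarith [hxcs]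
    · rw [if_neg hxcs]
      calc min (γ (κ x) x) (min (x - cs (κ x)) (cs (κ x + 1) - x))
          ≤ min (x - cs (κ x)) (cs (κ x + 1) - x) := min_le_right _ _
        _ ≤ cs (κ x + 1) - x := min_le_right _ _
        _ ≤ c - x := by linarith
  -- δ x ≤ γ K x for x in the K-th chunk
  have hδleγ : ∀ (K : ℕ) (x : ℝ), cs K ≤ x → x ≤ cs (K + 1) → δ x ≤ γ K x := by
    intro K x h1 h2
    have hxc : x < c := lt_of_le_of_lt h2 (hcslt _)
    rw [hδval x (ne_of_lt hxc)]
    rcases eq_or_lt_of_le h2 with heq | hlt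
    · have hκx : κ x = K + 1 := by
        apply hκeq (K + 1) x heq.ge
        rw [heq]
        exact hcsmono (K + 1) (K + 2) (by omega)
      have hxcs : x = cs (κ x) := by rw [hκx]; exact heq
      rw [if_pos hxcs]
      calc min (min (γ (κ x) x) (γ (κ x - 1) x)) (cs (κ x + 1) - cs (κ x))
          ≤ min (γ (κ x) x) (γ (κ x - 1) x) := min_le_left _ _
        _ ≤ γ (κ x - 1) x := min_le_right _ _
        _ = γ K x := by rw [hκx, Nat.add_sub_cancel]
    · have hκx : κ x = K := hκeq K x h1 hlt
      by_cases hxcs : x = cs (κ x)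
      · rw [if_pos hxcs]
        calc min (min (γ (κ x) x) (γ (κ x - 1) x)) (cs (κ x + 1) - cs (κ x))
            ≤ min (γ (κ x) x) (γ (κ x - 1) x) := min_le_left _ _
          _ ≤ γ (κ x) x := min_le_left _ _
          _ = γ K x := by rw [hκx]
      · rw [if_neg hxcs]
        calc min (γ (κ x) x) (min (x - cs (κ x)) (cs (κ x + 1) - x))
            ≤ γ (κ x) x := min_le_left _ _
          _ = γ K x := by rw [hκx]
  -- the gauge forces every division point cs K
  have hforce : ∀ (K : ℕ) (x : ℝ), a ≤ x → x < c → |x - cs K| < δ x → x = cs K := by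
    intro K x hax hxc habs
    by_contra hne
    have h1 := hκmin x hxc hax
    have h2 := hκspec x hxc
    have hle : δ x ≤ |x - cs K| := by
      rw [hδval x (ne_of_lt hxc)]
      by_cases hxcs : x = cs (κ x)
      · rw [if_pos hxcs]
        have hmK : κ x ≠ K := fun h => hne (by rw [hxcs, h])
        rcases Nat.lt_or_ge (κ x) K with h | h
        · have hK1 : cs (κ x + 1) ≤ cs K := hcsmono' _ _ (by omega)
          calc min (min (γ (κ x) x) (γ (κ x - 1) x)) (cs (κ x + 1) - cs (κ x))
              ≤ cs (κ x + 1) - cs (κ x) := min_le_right _ _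
            _ ≤ cs K - x := by
                have hx2 : x = cs (κ x) := hxcs
                linarith
            _ ≤ |x - cs K| := by rw [abs_sub_comm]; exact le_abs_self _
        · have hKκ : K < κ x := by omega
          have hgap1 : cs (κ x) - cs (κ x - 1) = (c - a) / 2 ^ (κ x) := by
            have hg := hgap (κ x - 1)
            rwa [show κ x - 1 + 1 = κ x by omega] at hg
          have hgap2 := hgap (κ x)
          have hcomp : (c - a) / 2 ^ (κ x + 1) ≤ (c - a) / 2 ^ (κ x) := by
            rw [div_le_div_iff₀ (by positivity) (by positivity)]
            have hp : (2:ℝ) ^ (κ x) ≤ 2 ^ (κ x + 1) := by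
              apply pow_le_pow_right₀ (by norm_num)
              omega
            nlinarith
          have hcsK : cs K ≤ cs (κ x - 1) := hcsmono' _ _ (by omega)
          calc min (min (γ (κ x) x) (γ (κ x - 1) x)) (cs (κ x + 1) - cs (κ x))
              ≤ cs (κ x + 1) - cs (κ x) := min_le_right _ _
            _ ≤ x - cs K := by
                have e1 : cs (κ x + 1) - cs (κ x) ≤ cs (κ x) - cs (κ x - 1) := by
                  rw [hgap1, hgap2]
                  exact hcomp
                have e2 : cs (κ x) - cs (κ x - 1) ≤ cs (κ x) - cs K := by linarith
                have e3 : cs (κ x + 1) - cs (κ x) ≤ cs (κ x) - cs K := le_trans e1 e2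
                have e4 : cs (κ x) - cs K = x - cs K := by rw [← hxcs]
                linarith
            _ ≤ |x - cs K| := le_abs_self _
      · rw [if_neg hxcs]
        have hxgt : cs (κ x) < x := lt_of_le_of_ne h1 (fun he => hxcs he.symm)
        rcases Nat.lt_or_ge K (κ x + 1) with h | h
        · have hcsK : cs K ≤ cs (κ x) := hcsmono' _ _ (by omega)
          calc min (γ (κ x) x) (min (x - cs (κ x)) (cs (κ x + 1) - x))
              ≤ min (x - cs (κ x)) (cs (κ x + 1) - x) := min_le_right _ _
            _ ≤ x - cs (κ x) := min_le_left _ _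
            _ ≤ x - cs K := by linarith
            _ ≤ |x - cs K| := le_abs_self _
        · have hcsK : cs (κ x + 1) ≤ cs K := hcsmono' _ _ (by omega)
          calc min (γ (κ x) x) (min (x - cs (κ x)) (cs (κ x + 1) - x))
              ≤ min (x - cs (κ x)) (cs (κ x + 1) - x) := min_le_right _ _
            _ ≤ cs (κ x + 1) - x := min_le_right _ _
            _ ≤ cs K - x := by linarith
            _ ≤ |x - cs K| := by rw [abs_sub_comm]; exact le_abs_self _
    linarith
  -- main induction: fine divisions of [a, b'] approximate F b'
  have main : ∀ K : ℕ, ∀ b' : ℝ, cs K < b' → b' ≤ cs (K + 1) →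
      ∀ D' : TaggedDiv a b', D'.IsFine δ →
      |D'.riemannSum f - F b'| ≤ ∑ k ∈ Finset.range (K + 1), e k := by
    intro K
    induction K with
    | zero =>
      intro b' hb1 hb2 D' hD'
      rw [Finset.sum_range_one]
      have hab' : a < b' := by rw [← hcs0]; exact hb1
      have hb'c : b' < c := lt_of_le_of_lt hb2 (hcslt 1)
      have h0A : HKIntegral a (cs 1) f (A 0) := by rw [← hcs0]; exact hA 0
      have h0g : IsGauge a (cs 1) (γ 0) := by rw [← hcs0]; exact hγg 0
      have h0b : ∀ E : TaggedDiv a (cs 1), E.IsFine (γ 0) → |E.riemannSum f - A 0| < e 0 := by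
        have := hγb 0
        rwa [hcs0] at this
      have hfine : D'.IsFine (γ 0) := by
        apply hD'.mono_tags
        intro j hj
        have ht := D'.t_mem_Icc hj
        exact hδleγ 0 _ (by rw [hcs0]; exact ht.1) (le_trans ht.2 hb2)
      exact partial_est_left hab' hb2 h0A (hF b' hab' hb'c) h0g h0b D' hfine
    | succ K ih =>
      intro b' hb1 hb2 D' hD'
      have hcsK1a : a < cs (K + 1) := hcsa' (K + 1) (Nat.succ_pos _)
      have hb'c : b' < c := lt_of_le_of_lt hb2 (hcslt _)
      have hab' : a < b' := lt_trans hcsK1a hb1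
      obtain ⟨D1, D2, hD1, hD2, hsum⟩ := split_at f δ D' hD' hcsK1a hb1
        (fun x hx habs => hforce (K + 1) x hx.1 (lt_of_le_of_lt hx.2 hb'c) habs)
      have hIH := ih (cs (K + 1)) (hcsmono K (K + 1) (Nat.lt_succ_self _)) le_rfl D1 hD1
      have hfine2 : D2.IsFine (γ (K + 1)) := by
        apply hD2.mono_tags
        intro j hj
        have ht := D2.t_mem_Icc hj
        exact hδleγ (K + 1) _ ht.1 (le_trans ht.2 hb2)
      obtain ⟨J0, hJ0⟩ := (hF b' hab' hb'c).sub hcsK1a.le hb1 le_rfl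
      have hFb' : F b' = F (cs (K + 1)) + J0 :=
        HKIntegral.add_eq hcsK1a hb1 (hF (cs (K + 1)) hcsK1a (hcslt _)) hJ0 (hF b' hab' hb'c)
      have hest2 := partial_est_left hb1 hb2 (hA (K + 1)) hJ0 (hγg (K + 1)) (hγb (K + 1)) D2 hfine2
      rw [Finset.sum_range_succ]
      calc |D'.riemannSum f - F b'|
          = |(D1.riemannSum f - F (cs (K + 1))) + (D2.riemannSum f - J0)| := by
            rw [← hsum, hFb']
            congr 1
            ring
        _ ≤ |D1.riemannSum f - F (cs (K + 1))| + |D2.riemannSum f - J0| := abs_add_le _ _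
        _ ≤ (∑ k ∈ Finset.range (K + 1), e k) + e (K + 1) := add_le_add hIH hest2
  -- geometric bound
  have hgeom : ∀ K : ℕ, (∑ k ∈ Finset.range (K + 1), e k) ≤ ε' := by
    intro K
    have heq : ∀ k : ℕ, e k = ε' / 2 * (1 / 2 : ℝ) ^ k := by
      intro k
      show ε' / 2 ^ (k + 1) = ε' / 2 * (1 / 2 : ℝ) ^ k
      rw [div_pow, one_pow, pow_succ]
      ring
    calc (∑ k ∈ Finset.range (K + 1), e k)
        = ε' / 2 * ∑ k ∈ Finset.range (K + 1), (1 / 2 : ℝ) ^ k := by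
          rw [Finset.mul_sum]
          exact Finset.sum_congr rfl fun k _ => heq k
      _ ≤ ε' / 2 * 2 := mul_le_mul_of_nonneg_left (sum_geometric_two_le _) (by linarith)
      _ = ε' := by ring
  -- final assembly
  refine ⟨δ, hδpos, ?_⟩
  intro D hD
  obtain ⟨m, hm⟩ : ∃ m, D.n = m + 1 := ⟨D.n - 1, by have := D.n_pos; omega⟩
  have hmDn : m < D.n := by omega
  have hlast : D.t m = c := by
    have hc_mem : c ∈ Set.Icc (D.u m) (D.u (m + 1)) := by
      rw [← hm, D.right]
      exact ⟨(D.u_mem (j := m) (by omega)).2, le_rfl⟩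
    have hIoo := hD m hmDn hc_mem
    by_contra hne
    have htlt : D.t m < c := lt_of_le_of_ne (D.t_mem_Icc hmDn).2 hne
    have hta : a ≤ D.t m := (D.t_mem_Icc hmDn).1
    have h2 := hδlec _ hta htlt
    have h3 := hIoo.2
    linarith
  have hm1 : 0 < m := by
    by_contra hm0
    have hm0' : m = 0 := by omega
    subst hm0'
    have ha_mem : a ∈ Set.Icc (D.u 0) (D.u 1) := by
      constructor
      · rw [D.left]
      · rw [show (1:ℕ) = D.n by omega, D.right]
        exact hac.le
    have h0 := hD 0 (by omega) ha_mem
    rw [hlast] at h0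
    have h1 := h0.1
    rw [hδc_eq] at h1
    have h2 : δc ≤ c - a := le_trans (min_le_left _ _) (min_le_right _ _)
    linarith
  set b' := D.u m with hb'def
  have hb'c : b' < c := by
    have := D.u_lt hmDn le_rfl
    rwa [D.right] at this
  have hab' : a < b' := by
    have := D.u_lt (show 0 < m from hm1) hmDn.le
    rwa [D.left] at this
  have hb'close : c - δ c < b' := by
    have hmem : b' ∈ Set.Icc (D.u m) (D.u (m + 1)) := ⟨le_rfl, (D.mono m hmDn).le⟩
    have := hD m hmDn hmem
    rw [hlast] at this
    exact this.1
  obtain ⟨K, hK1, hK2⟩ : ∃ K, cs K < b' ∧ b' ≤ cs (K + 1) := by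
    have h1 := hκmin b' hb'c hab'.le
    have h2 := hκspec b' hb'c
    rcases eq_or_lt_of_le h1 with heq | hlt
    · have hκpos : 0 < κ b' := by
        by_contra h0
        have h0' : κ b' = 0 := by omega
        rw [h0', hcs0] at heq
        linarith
      refine ⟨κ b' - 1, ?_, ?_⟩
      · have h3 := hcsmono (κ b' - 1) (κ b') (by omega)
        linarith
      · rw [show κ b' - 1 + 1 = κ b' by omega]
        exact heq.ge
    · exact ⟨κ b', hlt, h2.le⟩
  have hmain := main K b' hK1 hK2 (D.take m hm1 hmDn.le) (take_fine hD hm1 hmDn.le)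
  have hFb'G : |F b' - G| < ε' := by
    have hδρ : δc ≤ ρ := le_trans (min_le_left _ _) (min_le_left _ _)
    have hclose : c - δc < b' := by rw [hδc_eq] at hb'close; exact hb'close
    have hd : dist b' c < ρ := by
      rw [Real.dist_eq, abs_of_neg (show b' - c < 0 by linarith)]
      linarith
    have := hρ hd ⟨hab', hb'c⟩
    rwa [Real.dist_eq] at this
  have huc : D.u (m + 1) = c := by rw [← hm]; exact D.right
  have hdecomp : D.riemannSum f = (D.take m hm1 hmDn.le).riemannSum f + f c * (c - b') := by
    rw [take_sum]
    show (∑ j ∈ Finset.range D.n, f (D.t j) * (D.u (j + 1) - D.u j)) = _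
    rw [hm, Finset.sum_range_succ, hlast, huc, ← hb'def]
  have hSbound : |(D.take m hm1 hmDn.le).riemannSum f - F b'| ≤ ε' := le_trans hmain (hgeom K)
  have hf_c : |f c * (c - b')| < ε' := by
    have h1 : c - b' < δc := by rw [hδc_eq] at hb'close; linarith
    have h2 : δc ≤ ε' / (|f c| + 1) := min_le_right _ _
    rw [abs_mul, abs_of_pos (show 0 < c - b' by linarith)]
    have h3 : |f c| * (c - b') ≤ |f c| * δc := mul_le_mul_of_nonneg_left h1.le (abs_nonneg _)
    have h4 : |f c| * δc ≤ |f c| * (ε' / (|f c| + 1)) := mul_le_mul_of_nonneg_left h2 (abs_nonneg _)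
    have h5 : |f c| * (ε' / (|f c| + 1)) < (|f c| + 1) * (ε' / (|f c| + 1)) :=
      mul_lt_mul_of_pos_right (by linarith) (by positivity)
    have h6 : (|f c| + 1) * (ε' / (|f c| + 1)) = ε' := by field_simp
    linarith
  have htri : |D.riemannSum f - G| ≤
      |(D.take m hm1 hmDn.le).riemannSum f - F b'| + |f c * (c - b')| + |F b' - G| := by
    rw [hdecomp]
    have e1 : (D.take m hm1 hmDn.le).riemannSum f + f c * (c - b') - G
        = ((D.take m hm1 hmDn.le).riemannSum f - F b') + (f c * (c - b') + (F b' - G)) := by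
      ring
    rw [e1]
    refine le_trans (abs_add_le _ _) ?_
    have h7 := abs_add_le (f c * (c - b')) (F b' - G)
    linarith
  have hfin : |D.riemannSum f - G| < 3 * ε' := by linarith
  rw [hε'def] at hfin
  linarith

/-- **Theorem 3.2.1 (Cauchy extension).** If `f` is gauge integrable over `[a,b]` for every
`a < b < c` with integral `F b`, and `F b → G` as `b → c⁻`, then `f` is gauge integrable
over `[a,c]` with integral `G`. Conversely, if `f` is gauge integrable over `[a,c]` with
integral `Fc`, then the integrals over `[a,b]` exist and tend to `Fc` as `b → c⁻`. -/
theorem hkIntegral_cauchy_extension (a c : ℝ) (hac : a < c) (f : ℝ → ℝ) :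
    (∀ F : ℝ → ℝ, (∀ b : ℝ, a < b → b < c → HKIntegral a b f (F b)) →
      ∀ G : ℝ, Tendsto F (nhdsWithin c (Set.Ioo a c)) (nhds G) →
        HKIntegral a c f G) ∧
    (∀ Fc : ℝ, HKIntegral a c f Fc →
      ∃ F : ℝ → ℝ, (∀ b : ℝ, a < b → b < c → HKIntegral a b f (F b)) ∧
        Tendsto F (nhdsWithin c (Set.Ioo a c)) (nhds Fc)) := by
  constructor
  · intro F hF G hG
    exact cauchy_ext_part_one a c hac f F hF G hG
  · intro Fc hFc
    exact cauchy_ext_part_two a c hac f Fc hFc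
end

section
/- (Theorem 4.1.2) Let a < b be real numbers, for each n ∈ ℕ let sₙ : [a,b] → ℝ be gauge integrable over [a,b] with integral Sₙ, suppose sₙ(x) → f(x) for every x ∈ [a,b], and suppose f is gauge integrable over [a,b] with integral F. Then Sₙ → F as n → ∞ if and only if for every ε > 0 there exist a positive integer N and, for each n, a gauge δₙ on [a,b], such that for all n ≥ N and all δₙ-fine tagged divisions D of [a,b], |Σ_{([u,v],x)∈D} sₙ(x)(v − u) − F| < ε. -/
open Filter

def TaggedDiv.extend {a c : ℝ} (D : TaggedDiv a c) {d τ : ℝ} (hcd : c < d)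
    (hτ : τ ∈ Set.Icc c d) : TaggedDiv a d where
  n := D.n + 1
  u := fun j => if j ≤ D.n then D.u j else d
  t := fun j => if j < D.n then D.t j else τ
  n_pos := Nat.succ_pos _
  left := by simp [Nat.zero_le, D.left]
  right := by simp
  mono := by
    intro j hj
    rcases lt_or_eq_of_le (Nat.lt_succ_iff.mp hj) with h | h
    · simp only [h.le, Nat.succ_le_of_lt h, if_pos]
      exact D.mono j h
    · subst h
      simp only [le_refl, if_pos, Nat.not_succ_le_self, if_neg, not_false_iff]
      simpa [D.right] using hcd
  tag_mem := by
    intro j hj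
    rcases lt_or_eq_of_le (Nat.lt_succ_iff.mp hj) with h | h
    · simp only [h, h.le, Nat.succ_le_of_lt h, if_pos]
      exact D.tag_mem j h
    · subst h
      simp only [lt_irrefl, if_neg, not_false_iff, le_refl, if_pos, Nat.not_succ_le_self]
      simpa [D.right] using hτ

lemma TaggedDiv.extend_isFine {a c : ℝ} (D : TaggedDiv a c) {d τ : ℝ} (hcd : c < d)
    (hτ : τ ∈ Set.Icc c d) {δ : ℝ → ℝ} (hD : D.IsFine δ)
    (h : Set.Icc c d ⊆ Set.Ioo (τ - δ τ) (τ + δ τ)) : (D.extend hcd hτ).IsFine δ := by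
  intro j hj
  rcases lt_or_eq_of_le (Nat.lt_succ_iff.mp hj) with hlt | heq
  · simp only [TaggedDiv.extend, hlt, hlt.le, Nat.succ_le_of_lt hlt, if_pos]
    exact hD j hlt
  · subst heq
    simp only [TaggedDiv.extend, lt_irrefl, if_neg, not_false_iff, le_refl, if_pos,
      Nat.not_succ_le_self]
    simpa [D.right] using h

def TaggedDiv.single_s14 {a c : ℝ} (hac : a < c) (τ : ℝ) (hτ : τ ∈ Set.Icc a c) :
    TaggedDiv a c where
  n := 1
  u := fun j => if j = 0 then a else c
  t := fun _ => τ
  n_pos := one_pos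
  left := by simp
  right := by simp
  mono := by intro j hj; interval_cases j; simpa using hac
  tag_mem := by intro j hj; interval_cases j; simpa using hτ

lemma TaggedDiv.single_isFine {a c : ℝ} (hac : a < c) (τ : ℝ) (hτ : τ ∈ Set.Icc a c)
    {δ : ℝ → ℝ} (h : Set.Icc a c ⊆ Set.Ioo (τ - δ τ) (τ + δ τ)) :
    (TaggedDiv.single_s14 hac τ hτ).IsFine δ := by
  intro j hj
  obtain rfl : j = 0 := Nat.lt_one_iff.mp hj
  simpa [TaggedDiv.single_s14] using h

lemma cousin {a b : ℝ} (hab : a < b) {δ : ℝ → ℝ} (hδ : IsGauge a b δ) :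
    ∃ D : TaggedDiv a b, D.IsFine δ := by
  classical
  set E : Set ℝ := {c | a < c ∧ c ≤ b ∧ ∃ D : TaggedDiv a c, D.IsFine δ} with hE
  have hδa : 0 < δ a := hδ a ⟨le_refl a, hab.le⟩
  have hne : E.Nonempty := by
    have hac : a < min b (a + δ a / 2) := lt_min hab (by linarith)
    refine ⟨min b (a + δ a / 2), hac, min_le_left _ _, ?_⟩
    refine ⟨TaggedDiv.single_s14 hac a ⟨le_refl a, hac.le⟩, TaggedDiv.single_isFine hac a _ ?_⟩
    intro x hx
    have hx2 : x ≤ a + δ a / 2 := le_trans hx.2 (min_le_right _ _)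
    exact ⟨by linarith [hx.1], by linarith⟩
  have hbdd : BddAbove E := ⟨b, fun c hc => hc.2.1⟩
  set m := sSup E with hm
  have ham : a < m := by
    obtain ⟨c, hc⟩ := hne
    exact lt_of_lt_of_le hc.1 (le_csSup hbdd hc)
  have hmb : m ≤ b := csSup_le hne fun c hc => hc.2.1
  have hδm : 0 < δ m := hδ m ⟨ham.le, hmb⟩
  obtain ⟨c, hcE, hcm⟩ := exists_lt_of_lt_csSup hne (show m - δ m < m by linarith)
  have hcle : c ≤ m := le_csSup hbdd hcE
  obtain ⟨hac, hcb, D, hD⟩ := hcE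
  rcases eq_or_lt_of_le hcb with rfl | hcb'
  · exact ⟨D, hD⟩
  set d := min b (m + δ m / 2) with hd
  have hmd : m ≤ d := le_min hmb (by linarith)
  have hcd : c < d := by
    rcases lt_or_eq_of_le hmb with h | h
    · exact lt_of_le_of_lt hcle (lt_min h (by linarith))
    · have hdb : d = b := by rw [hd]; exact min_eq_left (by linarith)
      rw [hdb]; exact hcb'
  have hτ : m ∈ Set.Icc c d := ⟨hcle, hmd⟩
  have hfine : Set.Icc c d ⊆ Set.Ioo (m - δ m) (m + δ m) := by
    intro x hx
    have hx2 : x ≤ m + δ m / 2 := le_trans hx.2 (min_le_right _ _)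
    exact ⟨by linarith [hx.1], by linarith⟩
  have hdE : d ∈ E := ⟨hac.trans hcd, min_le_left _ _,
    D.extend hcd hτ, D.extend_isFine hcd hτ hD hfine⟩
  have hdm : d ≤ m := le_csSup hbdd hdE
  have hmbeq : m = b := by
    by_contra h
    have hmltb : m < b := lt_of_le_of_ne hmb h
    have : m < d := lt_min hmltb (by linarith)
    linarith
  have hdb : d = b := le_antisymm (min_le_left _ _) (hmbeq ▸ hmd)
  rw [hdb] at hdE
  exact hdE.2.2

lemma isFine_min {a b : ℝ} {δ₁ δ₂ : ℝ → ℝ} {D : TaggedDiv a b}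
    (h : D.IsFine fun x => min (δ₁ x) (δ₂ x)) : D.IsFine δ₁ ∧ D.IsFine δ₂ := by
  constructor <;> intro j hj <;> refine (h j hj).trans (Set.Ioo_subset_Ioo ?_ ?_)
  · simp only [sub_le_sub_iff_left]; exact min_le_left _ _
  · simp only [add_le_add_iff_left]; exact min_le_left _ _
  · simp only [sub_le_sub_iff_left]; exact min_le_right _ _
  · simp only [add_le_add_iff_left]; exact min_le_right _ _

/-- **Theorem 4.1.2.** With integrable `sₙ → f` pointwise and `f` integrable to `F`,
`Sₙ → F` iff for every `ε > 0` there are `N` and gauges `δₙ` such that for `n ≥ N` every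
`δₙ`-fine Riemann sum of `sₙ` is within `ε` of `F`. -/
theorem tendsto_integrals_iff (a b : ℝ) (hab : a < b) (s : ℕ → ℝ → ℝ) (S : ℕ → ℝ)
    (f : ℝ → ℝ) (F : ℝ)
    (hs : ∀ n : ℕ, HKIntegral a b (s n) (S n))
    (hconv : ∀ x ∈ Set.Icc a b, Tendsto (fun n => s n x) atTop (nhds (f x)))
    (hf : HKIntegral a b f F) :
    Tendsto S atTop (nhds F) ↔
      ∀ ε > 0, ∃ (N : ℕ) (δ : ℕ → ℝ → ℝ), (∀ n : ℕ, IsGauge a b (δ n)) ∧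
        ∀ n ≥ N, ∀ D : TaggedDiv a b, D.IsFine (δ n) →
          |D.riemannSum (s n) - F| < ε := by
  rw [Metric.tendsto_atTop]
  constructor
  · intro h ε hε
    obtain ⟨N, hN⟩ := h (ε / 2) (by linarith)
    choose δ hδg hδ using fun n => hs n (ε / 2) (by linarith)
    refine ⟨N, δ, hδg, fun n hn D hDf => ?_⟩
    have h1 := hδ n D hDf
    have h2 := hN n hn
    rw [Real.dist_eq] at h2
    calc |D.riemannSum (s n) - F|
        ≤ |D.riemannSum (s n) - S n| + |S n - F| := abs_sub_le _ _ _
      _ < ε / 2 + ε / 2 := add_lt_add h1 h2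
      _ = ε := by ring
  · intro h ε hε
    obtain ⟨N, δ, hδg, hδ⟩ := h (ε / 2) (by linarith)
    refine ⟨N, fun n hn => ?_⟩
    obtain ⟨δ', hδ'g, hδ'⟩ := hs n (ε / 2) (by linarith)
    have hg : IsGauge a b fun x => min (δ n x) (δ' x) :=
      fun x hx => lt_min (hδg n x hx) (hδ'g x hx)
    obtain ⟨D, hD⟩ := cousin hab hg
    obtain ⟨hD1, hD2⟩ := isFine_min hD
    have h1 := hδ n hn D hD1
    have h2 := hδ' D hD2
    rw [Real.dist_eq]
    calc |S n - F|
        ≤ |S n - D.riemannSum (s n)| + |D.riemannSum (s n) - F| := abs_sub_le _ _ _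
      _ < ε / 2 + ε / 2 := add_lt_add (by rw [abs_sub_comm]; exact h2) h1
      _ = ε := by ring
end
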